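/- Suppose K is an infinite simplicial complex (K_q is infinite) with bounded degree, and suppose the down graph Y_q is connected. Then the down discriminant D_q^down has neither 1 nor −1 as an eigenvalue: there is no nonzero g ∈ ℓ²(K_q) with D_q^down g = g or D_q^down g = −g. -/

import Mathlib

open scoped BigOperators

/-- The set of oriented `q`-simplices of a simplicial complex, together with the
orientation-reversal involution `bar` (writing `τ̄` for `bar τ`). -/
structure OrientedSet where
  K : Type
  bar : K → K
  bar_invol : ∀ τ, bar (bar τ) = τ
  bar_ne : ∀ τ, bar τ ≠ τ

/-- The data of an up graph (`mult = 2(q+1)`) or a down graph (`mult = 2`) on the set of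
oriented `q`-simplices: the sign function `η` (extended by `0` off the edge set, so that
`(τ₁, τ₂)` is an edge iff `eta τ₁ τ₂ ≠ 0`), the degree function (`deg_X`, resp. `deg_Y`),
and local finiteness; the degree of a vertex `τ` in the graph is `mult * deg τ`. -/
structure GroverStructure (O : OrientedSet) where
  eta : O.K → O.K → ℝ
  eta_symm : ∀ τ₁ τ₂, eta τ₁ τ₂ = eta τ₂ τ₁
  eta_vals : ∀ τ₁ τ₂, eta τ₁ τ₂ = 0 ∨ eta τ₁ τ₂ = 1 ∨ eta τ₁ τ₂ = -1
  eta_bar_left : ∀ τ₁ τ₂, eta (O.bar τ₁) τ₂ = - eta τ₁ τ₂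
  eta_self : ∀ τ, eta τ τ = 0
  eta_bar_self : ∀ τ, eta τ (O.bar τ) = 0
  deg : O.K → ℕ
  deg_pos : ∀ τ, 0 < deg τ
  deg_bar : ∀ τ, deg (O.bar τ) = deg τ
  mult : ℕ
  nbhdFinite : ∀ τ, {τ' | eta τ τ' ≠ 0}.Finite
  nbhd_card : ∀ τ, (nbhdFinite τ).toFinset.card = mult * deg τ

namespace GroverStructure

variable {O : OrientedSet} (Y : GroverStructure O)

/-- `(τ₁, τ₂)` is an oriented edge of the up/down graph. -/
def Edge (τ₁ τ₂ : O.K) : Prop := Y.eta τ₁ τ₂ ≠ 0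

/-- The normalization constant `(mult * deg τ)^(-1/2)`. -/
noncomputable def c (τ : O.K) : ℂ := ((Real.sqrt (Y.mult * Y.deg τ) : ℝ) : ℂ)⁻¹

/-- The operator `d : ℓ²(E) → ℓ²(K)`; elements of `ℓ²(E)` are represented as
functions on `K × K` (supported on the set of edges). -/
noncomputable def d (g : O.K × O.K → ℂ) : O.K → ℂ :=
  fun τ => Y.c τ * ∑ᶠ τ' ∈ {τ' | Y.eta τ τ' ≠ 0}, g (τ, τ')

/-- The adjoint `d* : ℓ²(K) → ℓ²(E)`. -/
noncomputable def dstar (f : O.K → ℂ) : O.K × O.K → ℂ :=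
  fun p => if Y.eta p.1 p.2 ≠ 0 then Y.c p.1 * f p.1 else 0

/-- The shift operator `(S g)(τ₁,τ₂) = η(τ₁,τ₂) • g(τ₂,τ₁)`. -/
noncomputable def shift (g : O.K × O.K → ℂ) : O.K × O.K → ℂ :=
  fun p => (Y.eta p.1 p.2 : ℂ) * g (p.2, p.1)

/-- The discriminant operator `D = d ∘ S ∘ d*`. -/
noncomputable def disc (f : O.K → ℂ) : O.K → ℂ := Y.d (Y.shift (Y.dstar f))

/-- The Grover walk `U = S (2 d* d − I)`. -/
noncomputable def walk (g : O.K × O.K → ℂ) : O.K × O.K → ℂ :=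
  Y.shift (fun p => 2 * Y.dstar (Y.d g) p - g p)

/-- Membership in `ℓ²(E)`: square summable and supported on the edge set. -/
def MemEdge (g : O.K × O.K → ℂ) : Prop :=
  Memℓp g 2 ∧ ∀ p : O.K × O.K, ¬ Y.Edge p.1 p.2 → g p = 0

end GroverStructure

/-- The orthogonal projection of `ℓ²(K_q)` onto the cochain space
`C^q(K,ℂ) = {f : f(τ̄) = -f(τ)}`. -/
noncomputable def projC (O : OrientedSet) (f : O.K → ℂ) : O.K → ℂ :=
  fun τ => (f τ - f (O.bar τ)) / 2

/-!
If `D g = ± g` with `g ∈ ℓ²`, then `φ τ = ‖c τ * g τ‖ = |g τ| / √(deg τ)` satisfies the sub-mean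
value inequality `deg τ * φ τ ≤ ∑_{τ' ~ τ} φ τ'`, since `|η| ≤ 1`. As `g ∈ ℓ²`, `φ` tends to `0`
at infinity, so a nonzero `φ` attains a positive maximum. By the maximum principle the maximum
propagates along the edges of the connected graph `Y_q`, so `φ` is a positive constant, which is
impossible on an infinite vertex set.
-/

open Filter Topology Finset

theorem Memℓp.tendsto_norm_cofinite_zero {α : Type*} {E : α → Type*}
    [∀ i, NormedAddCommGroup (E i)] {p : ENNReal} (hp : 0 < p.toReal) {f : ∀ i, E i}
    (hf : Memℓp f p) : Tendsto (fun i => ‖f i‖) cofinite (𝓝 0) := by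
  have hpow := (hf.summable hp).tendsto_cofinite_zero
  have hroot := ((Real.continuousAt_rpow_const 0 p.toReal⁻¹ (Or.inr (by positivity))).tendsto
    ).comp hpow
  simpa [Function.comp_def, Real.rpow_rpow_inv (norm_nonneg _) hp.ne',
    Real.zero_rpow (inv_ne_zero hp.ne')] using hroot

theorem exists_forall_le_of_tendsto_cofinite_zero {α : Type*} {φ : α → ℝ}
    (hφ : Tendsto φ cofinite (𝓝 0)) {a : α} (ha : 0 < φ a) : ∃ a₀, ∀ b, φ b ≤ φ a₀ := by
  have hfin : {b | φ a ≤ φ b}.Finite :=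
    eventually_cofinite.mp (hφ.eventually (eventually_lt_nhds ha)) |>.subset fun b hb => by
      simpa using hb
  obtain ⟨a₀, ha₀, hmax⟩ := Set.exists_max_image _ φ hfin ⟨a, le_refl (φ a)⟩
  exact ⟨a₀, fun b => (le_total (φ a) (φ b)).elim (hmax b) fun hb => hb.trans ha₀⟩

section MaximumPrinciple

variable {V : Type*} (N : V → Finset V) {φ : V → ℝ}

theorem eq_of_mem_of_card_mul_le_sum {v w : V} (hmean : #(N v) * φ v ≤ ∑ u ∈ N v, φ u)
    (hmax : ∀ u ∈ N v, φ u ≤ φ v) (hw : w ∈ N v) : φ w = φ v := by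
  by_contra hne
  have hlt : ∑ u ∈ N v, φ u < ∑ _u ∈ N v, φ v :=
    sum_lt_sum hmax ⟨w, hw, lt_of_le_of_ne (hmax w hw) hne⟩
  rw [sum_const, nsmul_eq_mul] at hlt
  linarith

theorem eq_of_reflTransGen_of_card_mul_le_sum {v₀ v : V}
    (hmean : ∀ v, #(N v) * φ v ≤ ∑ u ∈ N v, φ u) (hmax : ∀ v, φ v ≤ φ v₀)
    (hpath : Relation.ReflTransGen (fun a b => b ∈ N a) v₀ v) : φ v = φ v₀ := by
  induction hpath with
  | refl => rfl
  | tail _ hedge ih =>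
    rw [← ih] at hmax ⊢
    exact eq_of_mem_of_card_mul_le_sum N (hmean _) (fun u _ => hmax u) hedge

end MaximumPrinciple

namespace GroverStructure

variable {O : OrientedSet} (Y : GroverStructure O)

noncomputable def nbhd (τ : O.K) : Finset O.K := (Y.nbhdFinite τ).toFinset

@[simp]
theorem mem_nbhd {τ τ' : O.K} : τ' ∈ Y.nbhd τ ↔ Y.eta τ τ' ≠ 0 := by
  simp [nbhd]

theorem card_nbhd (τ : O.K) : #(Y.nbhd τ) = Y.mult * Y.deg τ := Y.nbhd_card τ

theorem norm_c (τ : O.K) : ‖Y.c τ‖ = (√(#(Y.nbhd τ) : ℝ))⁻¹ := by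
  rw [c, norm_inv, Complex.norm_real, Real.norm_of_nonneg (Real.sqrt_nonneg _), card_nbhd]
  push_cast
  rfl

theorem norm_c_le_one (τ : O.K) : ‖Y.c τ‖ ≤ 1 := by
  rw [norm_c]
  rcases Nat.eq_zero_or_pos #(Y.nbhd τ) with h | h
  · simp [h]
  · exact inv_le_one_of_one_le₀ (Real.one_le_sqrt.mpr (by exact_mod_cast h))

theorem norm_c_mul_le (f : O.K → ℂ) (τ : O.K) : ‖Y.c τ * f τ‖ ≤ ‖f τ‖ :=
  (norm_mul_le _ _).trans (mul_le_of_le_one_left (norm_nonneg _) (Y.norm_c_le_one τ))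

theorem card_nbhd_mul_norm_c_sq_le_one (τ : O.K) : #(Y.nbhd τ) * ‖Y.c τ‖ ^ 2 ≤ 1 := by
  rw [norm_c, inv_pow, Real.sq_sqrt (Nat.cast_nonneg _)]
  exact mul_inv_le_one

theorem disc_apply (f : O.K → ℂ) (τ : O.K) :
    Y.disc f τ = Y.c τ * ∑ τ' ∈ Y.nbhd τ, (Y.eta τ τ' : ℂ) * (Y.c τ' * f τ') := by
  rw [disc, d, finsum_mem_eq_finite_toFinset_sum _ (Y.nbhdFinite τ)]
  congr 1
  refine sum_congr rfl fun τ' hτ' => ?_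
  simp [shift, dstar, Y.eta_symm τ' τ, Y.mem_nbhd.mp hτ']

theorem norm_disc_apply_le (f : O.K → ℂ) (τ : O.K) :
    ‖Y.disc f τ‖ ≤ ‖Y.c τ‖ * ∑ τ' ∈ Y.nbhd τ, ‖Y.c τ' * f τ'‖ := by
  rw [disc_apply, norm_mul]
  gcongr
  refine (norm_sum_le _ _).trans (sum_le_sum fun τ' _ => ?_)
  rw [norm_mul]
  have heta : ‖(Y.eta τ τ' : ℂ)‖ ≤ 1 := by
    rcases Y.eta_vals τ τ' with h | h | h <;> simp [h]
  exact mul_le_of_le_one_left (norm_nonneg _) heta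

theorem card_nbhd_mul_le_sum_of_norm_le_norm_disc {f : O.K → ℂ} {τ : O.K}
    (h : ‖f τ‖ ≤ ‖Y.disc f τ‖) :
    #(Y.nbhd τ) * ‖Y.c τ * f τ‖ ≤ ∑ τ' ∈ Y.nbhd τ, ‖Y.c τ' * f τ'‖ := by
  have hsum : 0 ≤ ∑ τ' ∈ Y.nbhd τ, ‖Y.c τ' * f τ'‖ :=
    sum_nonneg fun _ _ => norm_nonneg _
  calc (#(Y.nbhd τ) : ℝ) * ‖Y.c τ * f τ‖
      ≤ #(Y.nbhd τ) * (‖Y.c τ‖ * (‖Y.c τ‖ * ∑ τ' ∈ Y.nbhd τ, ‖Y.c τ' * f τ'‖)) := by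
        rw [norm_mul]
        gcongr
        exact h.trans (Y.norm_disc_apply_le f τ)
    _ = #(Y.nbhd τ) * ‖Y.c τ‖ ^ 2 * ∑ τ' ∈ Y.nbhd τ, ‖Y.c τ' * f τ'‖ := by ring
    _ ≤ ∑ τ' ∈ Y.nbhd τ, ‖Y.c τ' * f τ'‖ :=
        mul_le_of_le_one_left hsum (Y.card_nbhd_mul_norm_c_sq_le_one τ)

theorem disc_eq_zero_of_forall_c_mul_eq_zero {f : O.K → ℂ} (h : ∀ τ, Y.c τ * f τ = 0) :
    Y.disc f = 0 := by
  ext τ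
  simp [disc_apply, h]

end GroverStructure

theorem disc_down_no_eigenvalue_pm_one_of_infinite_general
    (O : OrientedSet) [Infinite O.K]
    (Y : GroverStructure O)
    (hconn : ∀ σ σ' : O.K, Relation.ReflTransGen (fun a b => Y.eta a b ≠ 0) σ σ') :
    ¬ ∃ g : O.K → ℂ, Memℓp g 2 ∧ g ≠ 0 ∧
        (Y.disc g = g ∨ Y.disc g = fun τ => - g τ) := by
  rintro ⟨g, hg2, hne, heig⟩
  have hnorm : ∀ τ, ‖g τ‖ ≤ ‖Y.disc g τ‖ := by
    rcases heig with h | h <;> simp [h]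
  set φ : O.K → ℝ := fun τ => ‖Y.c τ * g τ‖
  have hφ0 : Tendsto φ cofinite (𝓝 0) :=
    squeeze_zero (fun τ => norm_nonneg _) (Y.norm_c_mul_le g)
      (hg2.tendsto_norm_cofinite_zero (by norm_num))
  obtain ⟨τ₁, hτ₁⟩ : ∃ τ, 0 < φ τ := by
    by_contra! hφ
    refine hne (funext fun τ => ?_)
    have hdisc := Y.disc_eq_zero_of_forall_c_mul_eq_zero fun τ => norm_le_zero_iff.mp (hφ τ)
    simpa [hdisc] using hnorm τ
  obtain ⟨τ₀, hmax⟩ := exists_forall_le_of_tendsto_cofinite_zero hφ0 hτ₁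
  have hconst : ∀ τ, φ τ = φ τ₀ := fun τ =>
    eq_of_reflTransGen_of_card_mul_le_sum Y.nbhd
      (fun τ => Y.card_nbhd_mul_le_sum_of_norm_le_norm_disc (hnorm τ)) hmax
      (Relation.ReflTransGen.mono (fun _ _ => Y.mem_nbhd.mpr) _ _ (hconn τ₀ τ))
  have hlim : φ τ₀ = 0 := tendsto_const_nhds_iff.mp (hφ0.congr hconst)
  exact (hτ₁.trans_le (hmax τ₁)).ne' hlim

/-- For an infinite simplicial complex with bounded degree whose down
graph `Y_q` is connected, the down discriminant `D_q^down` has neither `1` nor `−1` as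
an eigenvalue. -/
theorem disc_down_no_eigenvalue_pm_one_of_infinite
    (O : OrientedSet) [Infinite O.K]
    (Y : GroverStructure O) (hYm : Y.mult = 2)
    (hbdd : ∃ C : ℕ, ∀ τ, Y.deg τ ≤ C)
    (hconn : ∀ σ σ' : O.K, Relation.ReflTransGen (fun a b => Y.eta a b ≠ 0) σ σ') :
    ¬ ∃ g : O.K → ℂ, Memℓp g 2 ∧ g ≠ 0 ∧
        (Y.disc g = g ∨ Y.disc g = fun τ => - g τ) :=
  disc_down_no_eigenvalue_pm_one_of_infinite_general O Y hconn
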